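/- Let G be a connected simple graph on n ≥ 2 vertices with Wiener index W(G) and maximum transmission Tr_max(G). Then DLS(G) ≤ 2(n−1)·Tr_max(G) − 2W(G). -/

import Mathlib

/-!
Gershgorin's theorem bounds every distance Laplacian eigenvalue by `2 Tr(k) ≤ 2 Tr_max`, the
constant vector shows that `0` is an eigenvalue, and the eigenvalues sum to
`trace D^L = 2 W(G)`. Hence `∂₁ ≤ 2 Tr_max`, while
`2 W = ∂_{n-1} + ∂ₙ + ∑_{i ≤ n-2} ∂ᵢ ≤ ∂_{n-1} + 0 + (n - 2) · 2 Tr_max`.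
-/

open Finset Matrix Polynomial

/-- The transmission `Tr(v)` of a vertex `v`: the sum of the distances from `v`
to all other vertices of the graph. -/
noncomputable def transm {n : ℕ} (G : SimpleGraph (Fin n)) (v : Fin n) : ℝ :=
  ∑ u : Fin n, (G.dist v u : ℝ)

/-- The distance Laplacian matrix `D^L(G) = Diag(Tr) - D(G)` of a graph `G`. -/
noncomputable def distLap {n : ℕ} (G : SimpleGraph (Fin n)) : Matrix (Fin n) (Fin n) ℝ :=
  Matrix.diagonal (transm G) - Matrix.of (fun u v : Fin n => (G.dist u v : ℝ))

/-- `IsDLSpec G μ` says that `μ 0 , μ 1 , …, μ (n-1)` are exactly the eigenvalues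
(with multiplicity) of the distance Laplacian matrix of `G`; combined with `Antitone μ`
this means `μ ⟨i-1,_⟩ = ∂_i^L(G)` in the usual decreasing ordering. -/
def IsDLSpec {n : ℕ} (G : SimpleGraph (Fin n)) (μ : Fin n → ℝ) : Prop :=
  (distLap G).charpoly = ∏ i : Fin n, (X - C (μ i))

/-- The Wiener index `W(G) = (1/2) ∑_v Tr(v)`. -/
noncomputable def wiener {n : ℕ} (G : SimpleGraph (Fin n)) : ℝ :=
  (∑ v : Fin n, transm G v) / 2

/-- The maximum transmission `Tr_max(G) = max_v Tr(v)`. -/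
noncomputable def trMax {n : ℕ} (G : SimpleGraph (Fin n)) : ℝ :=
  ⨆ v : Fin n, transm G v

namespace Matrix

variable {ι : Type*} [Fintype ι] [DecidableEq ι]

theorem trace_eq_sum_of_charpoly_eq_prod {R : Type*} [CommRing R] {A : Matrix ι ι R}
    {μ : ι → R} (hμ : A.charpoly = ∏ i, (X - C (μ i))) :
    A.trace = ∑ i, μ i := by
  rw [trace_eq_neg_charpoly_nextCoeff, hμ, prod_X_sub_C_nextCoeff, neg_neg]

theorem hasEigenvalue_toLin'_iff_of_charpoly_eq_prod {K : Type*} [Field K] {A : Matrix ι ι K}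
    {μ : ι → K} (hμ : A.charpoly = ∏ i, (X - C (μ i))) {c : K} :
    Module.End.HasEigenvalue (toLin' A) c ↔ ∃ i, μ i = c := by
  rw [Module.End.hasEigenvalue_iff_isRoot_charpoly, charpoly_toLin', hμ, IsRoot,
    eval_prod, prod_eq_zero_iff]
  simp [sub_eq_zero, eq_comm]

end Matrix

theorem Finset.sum_le_apply_add_card_sub_two_mul {ι R : Type*} [Fintype ι] [DecidableEq ι]
    [CommRing R] [LinearOrder R] [IsStrictOrderedRing R] {f : ι → R} {a b : ι} (hab : a ≠ b)
    {M : R} (hM : ∀ i, f i ≤ M) (hb : f b ≤ 0) :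
    ∑ i, f i ≤ f a + ((Fintype.card ι : R) - 2) * M := by
  set s := (univ.erase a).erase b
  have hb_mem : b ∈ univ.erase a := mem_erase.2 ⟨hab.symm, mem_univ b⟩
  have hsplit : ∑ i, f i = f a + (f b + ∑ i ∈ s, f i) := by
    rw [add_sum_erase _ f hb_mem, add_sum_erase _ f (mem_univ a)]
  have hcard : (#s : R) = (Fintype.card ι : R) - 2 := by
    have h2 : 2 ≤ Fintype.card ι := by
      have := card_pos.2 ⟨b, hb_mem⟩
      rw [card_erase_of_mem (mem_univ a), card_univ] at this
      omega
    rw [card_erase_of_mem hb_mem, card_erase_of_mem (mem_univ a), card_univ,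
      Nat.sub_sub, Nat.cast_sub h2]
    norm_num
  have hs : ∑ i ∈ s, f i ≤ #s • M := sum_le_card_nsmul s f M fun i _ => hM i
  rw [nsmul_eq_mul, hcard] at hs
  linarith

section DistanceLaplacian

variable {n : ℕ} (G : SimpleGraph (Fin n))

theorem distLap_apply_self (v : Fin n) : distLap G v v = transm G v := by
  simp [distLap]

theorem sum_erase_norm_distLap (k : Fin n) :
    ∑ j ∈ univ.erase k, ‖distLap G k j‖ = transm G k := by
  rw [transm, ← sum_erase univ (a := k) (by simp)]
  refine sum_congr rfl fun j hj => ?_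
  simp [distLap, diagonal, (ne_of_mem_erase hj).symm]

theorem distLap_mulVec_one : distLap G *ᵥ 1 = 0 := by
  ext v
  simp [distLap, mulVec, dotProduct, diagonal, transm, sum_sub_distrib]

theorem trace_distLap : (distLap G).trace = 2 * wiener G := by
  simp [distLap, trace, wiener, mul_div_cancel₀]

theorem transm_le_trMax (v : Fin n) : transm G v ≤ trMax G :=
  le_ciSup (Set.finite_range _).bddAbove v

theorem hasEigenvalue_distLap_zero [NeZero n] :
    Module.End.HasEigenvalue (toLin' (distLap G)) 0 := by
  refine Module.End.hasEigenvalue_of_hasEigenvector ⟨?_, one_ne_zero⟩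
  rw [Module.End.mem_eigenspace_iff, toLin'_apply, distLap_mulVec_one, zero_smul]

theorem le_two_mul_trMax_of_hasEigenvalue {c : ℝ}
    (hc : Module.End.HasEigenvalue (toLin' (distLap G)) c) : c ≤ 2 * trMax G := by
  obtain ⟨k, hk⟩ := eigenvalue_mem_ball hc
  rw [distLap_apply_self, sum_erase_norm_distLap, Metric.mem_closedBall, Real.dist_eq] at hk
  linarith [(abs_le.1 hk).2, transm_le_trMax G k]

end DistanceLaplacian

theorem dls_upper_wiener_trMax (n : ℕ) (hn : 2 ≤ n) (G : SimpleGraph (Fin n))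
    (μ : Fin n → ℝ) (hμ : IsDLSpec G μ) (hmono : Antitone μ) :
    μ ⟨0, by omega⟩ - μ ⟨n - 2, by omega⟩ ≤ 2 * ((n : ℝ) - 1) * trMax G - 2 * wiener G := by
  have : NeZero n := ⟨by omega⟩
  have hle (i : Fin n) : μ i ≤ 2 * trMax G := le_two_mul_trMax_of_hasEigenvalue G
    ((hasEigenvalue_toLin'_iff_of_charpoly_eq_prod hμ).2 ⟨i, rfl⟩)
  have hlast : μ ⟨n - 1, by omega⟩ ≤ 0 := by
    obtain ⟨i, hi⟩ := (hasEigenvalue_toLin'_iff_of_charpoly_eq_prod hμ).1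
      (hasEigenvalue_distLap_zero G)
    exact hi ▸ hmono (Fin.le_def.2 (by simp only; omega))
  have hsum := sum_le_apply_add_card_sub_two_mul (a := ⟨n - 2, by omega⟩)
    (Fin.ne_of_val_ne (by simp only; omega)) hle hlast
  rw [← trace_eq_sum_of_charpoly_eq_prod hμ, trace_distLap, Fintype.card_fin] at hsum
  linarith [hle ⟨0, by omega⟩]
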